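/- For every integer n ≥ 3, the polynomial χ(x) = ∏_{j=1}^{n}(x + (1+j)/2)_{n+1-j} (rising factorials with real arguments) has -2 as a root of multiplicity at least 2. -/

import Mathlib

open Polynomial

theorem X_add_natCast_dvd_ascPochhammer {R : Type*} [CommSemiring R] {k m : ℕ} (hkm : k < m) :
    X + (k : R[X]) ∣ ascPochhammer R m := by
  obtain ⟨l, rfl⟩ := Nat.exists_eq_add_of_lt hkm
  calc X + (k : R[X]) ∣ ascPochhammer R (k + 1) :=
        (ascPochhammer_succ_right R k).symm ▸ dvd_mul_left _ _
    _ ∣ ascPochhammer R (k + 1 + l) := ascPochhammer_mul R (k + 1) l ▸ dvd_mul_right _ _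
    _ = ascPochhammer R (k + l + 1) := by rw [add_right_comm]

theorem X_add_C_dvd_ascPochhammer_comp {R : Type*} [CommSemiring R] (a : R) {k m : ℕ}
    (hkm : k < m) : X + C (a + k) ∣ (ascPochhammer R m).comp (X + C a) := by
  have h := map_dvd (compRingHom (X + C a)) (X_add_natCast_dvd_ascPochhammer (R := R) hkm)
  rwa [coe_compRingHom_apply, add_comp, X_comp, natCast_comp, add_assoc, ← C_eq_natCast,
    ← C_add] at h

/-- For `n ≥ 3`, the Hua polynomial `χ(x) = ∏_{j=1}^{n}(x + (1+j)/2)_{n+1-j}` of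
`Ω_III(n)` has `-2` as a root of multiplicity at least `2`. -/
theorem stmt_12 (n : ℕ) (hn : 3 ≤ n) :
    (X + C (2 : ℝ)) ^ 2 ∣
      ∏ j ∈ Finset.Icc 1 n,
        (ascPochhammer ℝ (n + 1 - j)).comp (X + C ((1 + (j : ℝ)) / 2)) := by
  set χ : ℕ → ℝ[X] := fun j ↦
    (ascPochhammer ℝ (n + 1 - j)).comp (X + C ((1 + (j : ℝ)) / 2))
  -- The factors `j = 1, 3` are `(x + 1)_n` and `(x + 2)_{n-2}`; both vanish at `-2` once `n ≥ 3`.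
  have h1 : X + C 2 ∣ χ 1 := by
    have h := X_add_C_dvd_ascPochhammer_comp (1 : ℝ) (k := 1) (m := n) (by omega)
    norm_num [χ] at h ⊢
    exact h
  have h3 : X + C 2 ∣ χ 3 := by
    have h := X_add_C_dvd_ascPochhammer_comp (2 : ℝ) (k := 0) (m := n + 1 - 3) (by omega)
    norm_num [χ] at h ⊢
    exact h
  have hsub : ({1, 3} : Finset ℕ) ⊆ Finset.Icc 1 n := by
    intro j hj
    simp only [Finset.mem_insert, Finset.mem_singleton] at hj
    simp only [Finset.mem_Icc]
    omega
  calc (X + C 2) ^ 2 ∣ χ 1 * χ 3 := sq (X + C (2 : ℝ)) ▸ mul_dvd_mul h1 h3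
    _ = ∏ j ∈ {1, 3}, χ j := (Finset.prod_pair (by norm_num)).symm
    _ ∣ ∏ j ∈ Finset.Icc 1 n, χ j := Finset.prod_dvd_prod_of_subset _ _ _ hsub
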